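/- arXiv:1403.0450 — 3 statements merged into one kernel-verified Lean document; each statement's English description precedes it below -/
import Mathlib

section
/- Let T and S be trees of finite binary strings, with S nonempty and pruned, meaning that every σ ∈ S is an initial segment of some path of S. Call σ ∈ T terminal if σ ∈ T but neither σ0 nor σ1 belongs to T. Let U = T ∪ { σ ++ τ : σ terminal in T and τ ∈ S }. Then: (1) U is a tree; (2) every element of U is an initial segment of some path of U; and (3) the paths of U are exactly the paths of T together with the sequences σ⌢X obtained by concatenating a terminal node σ of T with a path X of S. -/
/-!
A path of `U` that leaves `T` does so above a terminal node `σ`; since terminal nodes of a tree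
are pairwise prefix-incomparable, this `σ` is the same for all later initial segments, so the
path is `σ⌢Y` with `Y` a path of `S`. For prunedness, a node of `T` either lies below a terminal
node, through which it extends by any path of `S`, or every node of `T` above it has a child in
`T`, and dependent choice produces a path of `T` through it.
-/

/-- The initial segment of length `n` of an infinite binary sequence. -/
def initSeg (X : ℕ → Bool) (n : ℕ) : List Bool := List.ofFn fun i : Fin n => X i

/-- `X` is a path of the tree `T`: all its initial segments belong to `T`. -/
def IsPathOf (T : Set (List Bool)) (X : ℕ → Bool) : Prop := ∀ n, initSeg X n ∈ T

/-- Concatenation `σ⌢Y` of a finite string with an infinite sequence. -/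
def catSeq (σ : List Bool) (Y : ℕ → Bool) : ℕ → Bool :=
  fun n => if h : n < σ.length then σ.get ⟨n, h⟩ else Y (n - σ.length)

section InitSeg

variable (X : ℕ → Bool)

@[simp] theorem initSeg_length (n : ℕ) : (initSeg X n).length = n := by
  simp [initSeg]

@[simp] theorem getElem_initSeg (n i : ℕ) (h : i < (initSeg X n).length) :
    (initSeg X n)[i] = X i := by
  simp [initSeg]

theorem initSeg_prefix_initSeg {m n : ℕ} (h : m ≤ n) : initSeg X m <+: initSeg X n := by
  rw [List.prefix_iff_eq_take]
  apply List.ext_getElem (by simp [Nat.min_eq_left h])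
  intro i _ _
  simp [List.getElem_take]

theorem initSeg_eq_of_prefix {X} {σ : List Bool} {n : ℕ} (h : σ <+: initSeg X n) :
    initSeg X σ.length = σ := by
  apply List.ext_getElem (by simp)
  intro i _ hi
  rw [getElem_initSeg, h.getElem hi, getElem_initSeg]

theorem initSeg_catSeq_add (σ : List Bool) (Y : ℕ → Bool) (m : ℕ) :
    initSeg (catSeq σ Y) (σ.length + m) = σ ++ initSeg Y m := by
  apply List.ext_getElem (by simp)
  intro i _ _
  rw [getElem_initSeg]
  by_cases hi : i < σ.length
  · simp [catSeq, hi, List.getElem_append_left hi]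
  · simp [catSeq, hi, List.getElem_append_right (le_of_not_gt hi)]

theorem initSeg_catSeq_length (σ : List Bool) (Y : ℕ → Bool) :
    initSeg (catSeq σ Y) σ.length = σ := by
  simpa [initSeg] using initSeg_catSeq_add σ Y 0

theorem catSeq_shift_of_initSeg_eq {X} {σ : List Bool} (h : initSeg X σ.length = σ) :
    catSeq σ (fun i => X (σ.length + i)) = X := by
  funext i
  by_cases hi : i < σ.length
  · simp only [catSeq, dif_pos hi, List.get_eq_getElem]
    rw [List.getElem_of_eq h.symm, getElem_initSeg]
  · simp only [catSeq, dif_neg hi]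
    congr 1
    omega

theorem exists_initSeg_eq_of_chain (f : ℕ → List Bool) (hchain : ∀ n, f n <+: f (n + 1))
    (hlen : ∀ n, n ≤ (f n).length) : ∃ X, ∀ n, initSeg X (f n).length = f n := by
  have hmono : ∀ ⦃m n⦄, m ≤ n → f m <+: f n :=
    Nat.rel_of_forall_rel_succ_of_le (· <+: ·) hchain
  refine ⟨fun i => (f (i + 1)).getD i false, fun n => ?_⟩
  apply List.ext_getElem (initSeg_length _ _)
  intro i _ hin
  have hi : i < (f (i + 1)).length := hlen (i + 1)
  rw [getElem_initSeg, List.getD_eq_getElem _ _ hi]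
  rcases le_total (i + 1) n with h | h
  · exact (hmono h).getElem hi
  · exact ((hmono h).getElem hin).symm

theorem exists_initSeg_of_forall_exists_append {P : List Bool → Prop} {σ : List Bool}
    (hσ : P σ) (hext : ∀ τ, P τ → ∃ b, P (τ ++ [b])) :
    ∃ X, initSeg X σ.length = σ ∧ ∀ n, P (initSeg X (σ.length + n)) := by
  choose! b hb using hext
  let f : ℕ → List Bool := fun n => (fun τ => τ ++ [b τ])^[n] σ
  have hf_succ : ∀ n, f (n + 1) = f n ++ [b (f n)] := fun n =>
    Function.iterate_succ_apply' _ _ _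
  have hP : ∀ n, P (f n) := by
    intro n
    induction n with
    | zero => exact hσ
    | succ n ih => rw [hf_succ]; exact hb _ ih
  have hlen : ∀ n, (f n).length = σ.length + n := by
    intro n
    induction n with
    | zero => rfl
    | succ n ih => rw [hf_succ, List.length_append, ih, List.length_singleton, Nat.add_assoc]
  obtain ⟨X, hX⟩ := exists_initSeg_eq_of_chain f
    (fun n => hf_succ n ▸ List.prefix_append _ _) (fun n => by have := hlen n; omega)
  refine ⟨X, hX 0, fun n => ?_⟩
  rw [← hlen n, hX n]
  exact hP n

end InitSeg

def IsTree (T : Set (List Bool)) : Prop :=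
  ∀ σ τ : List Bool, σ <+: τ → τ ∈ T → σ ∈ T

def IsPruned (T : Set (List Bool)) : Prop :=
  ∀ σ ∈ T, ∃ X, IsPathOf T X ∧ initSeg X σ.length = σ

def IsTerminal (T : Set (List Bool)) (σ : List Bool) : Prop :=
  σ ∈ T ∧ σ ++ [false] ∉ T ∧ σ ++ [true] ∉ T

def graft (T S : Set (List Bool)) : Set (List Bool) :=
  T ∪ {υ | ∃ σ τ, IsTerminal T σ ∧ τ ∈ S ∧ υ = σ ++ τ}

theorem IsPathOf.mono {T U : Set (List Bool)} {X : ℕ → Bool} (h : T ⊆ U) (hX : IsPathOf T X) :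
    IsPathOf U X :=
  fun n => h (hX n)

section Tree

variable {T S : Set (List Bool)}

theorem IsTerminal.eq_of_prefix (hT : IsTree T) {σ τ : List Bool} (hσ : IsTerminal T σ)
    (hτ : τ ∈ T) (hστ : σ <+: τ) : σ = τ := by
  obtain ⟨ρ, rfl⟩ := hστ
  cases ρ with
  | nil => simp
  | cons b ρ =>
    have hchild : σ ++ [b] ∈ T := hT _ _ (by simp) hτ
    cases b
    · exact absurd hchild hσ.2.1
    · exact absurd hchild hσ.2.2

theorem IsTerminal.eq_of_prefix_of_prefix (hT : IsTree T) {σ σ' ρ : List Bool}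
    (hσ : IsTerminal T σ) (hσ' : IsTerminal T σ') (h : σ <+: ρ) (h' : σ' <+: ρ) : σ = σ' := by
  rcases List.prefix_or_prefix_of_prefix h h' with hle | hle
  · exact hσ.eq_of_prefix hT hσ'.1 hle
  · exact (hσ'.eq_of_prefix hT hσ.1 hle).symm

theorem IsTree.exists_path_of_forall_not_isTerminal (hT : IsTree T) {σ : List Bool}
    (hσ : σ ∈ T) (h : ∀ τ, σ <+: τ → ¬IsTerminal T τ) :
    ∃ X, IsPathOf T X ∧ initSeg X σ.length = σ := by
  obtain ⟨X, hXσ, hX⟩ := exists_initSeg_of_forall_exists_append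
    (P := fun τ => τ ∈ T ∧ σ <+: τ) ⟨hσ, List.prefix_refl σ⟩ <| by
      rintro τ ⟨hτ, hστ⟩
      by_contra! hno
      exact h τ hστ ⟨hτ, fun h0 => hno false h0 (hστ.trans (List.prefix_append _ _)),
        fun h1 => hno true h1 (hστ.trans (List.prefix_append _ _))⟩
  refine ⟨X, fun n => ?_, hXσ⟩
  rcases le_or_gt n σ.length with hn | hn
  · exact hT _ _ (hXσ ▸ initSeg_prefix_initSeg X hn) hσ
  · obtain ⟨k, rfl⟩ := Nat.exists_eq_add_of_lt hn
    exact (hX (k + 1)).1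

theorem isTree_graft (hT : IsTree T) (hS : IsTree S) : IsTree (graft T S) := by
  rintro υ ρ hυρ (hρ | ⟨σ, τ, hσ, hτ, rfl⟩)
  · exact Or.inl (hT _ _ hυρ hρ)
  · rcases List.prefix_or_prefix_of_prefix hυρ (List.prefix_append σ τ) with h | ⟨τ', rfl⟩
    · exact Or.inl (hT _ _ h hσ.1)
    · rw [List.prefix_append_right_inj] at hυρ
      exact Or.inr ⟨σ, τ', hσ, hS _ _ hυρ hτ, rfl⟩

theorem isPathOf_graft_catSeq (hT : IsTree T) {σ : List Bool} {Y : ℕ → Bool}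
    (hσ : IsTerminal T σ) (hY : IsPathOf S Y) : IsPathOf (graft T S) (catSeq σ Y) := by
  intro n
  rcases le_or_gt n σ.length with h | h
  · refine Or.inl (hT _ _ ?_ hσ.1)
    simpa only [initSeg_catSeq_length] using initSeg_prefix_initSeg (catSeq σ Y) h
  · obtain ⟨m, rfl⟩ := Nat.exists_eq_add_of_le h.le
    exact Or.inr ⟨σ, initSeg Y m, hσ, hY m, initSeg_catSeq_add σ Y m⟩

theorem isPruned_graft (hT : IsTree T) (hSne : S.Nonempty) (hSpruned : IsPruned S) :
    IsPruned (graft T S) := by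
  rintro υ (hυ | ⟨σ, τ, hσ, hτ, rfl⟩)
  · by_cases hterm : ∃ σ, υ <+: σ ∧ IsTerminal T σ
    · obtain ⟨σ, hυσ, hσ⟩ := hterm
      obtain ⟨ρ, hρ⟩ := hSne
      obtain ⟨Y, hY, -⟩ := hSpruned ρ hρ
      refine ⟨catSeq σ Y, isPathOf_graft_catSeq hT hσ hY,
        initSeg_eq_of_prefix (n := σ.length) ?_⟩
      rwa [initSeg_catSeq_length]
    · push Not at hterm
      obtain ⟨X, hX, hXυ⟩ := hT.exists_path_of_forall_not_isTerminal hυ hterm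
      exact ⟨X, hX.mono Set.subset_union_left, hXυ⟩
  · obtain ⟨Y, hY, hYτ⟩ := hSpruned τ hτ
    refine ⟨catSeq σ Y, isPathOf_graft_catSeq hT hσ hY, ?_⟩
    rw [List.length_append, initSeg_catSeq_add, hYτ]

theorem IsTerminal.mem_of_append_mem_graft (hT : IsTree T) {σ ρ : List Bool}
    (hσ : IsTerminal T σ) (h : σ ++ ρ ∈ graft T S) (hρ : σ ++ ρ ∉ T) : ρ ∈ S := by
  obtain ⟨σ', τ, hσ', hτ, heq⟩ := h.resolve_left hρ
  obtain rfl : σ = σ' := hσ.eq_of_prefix_of_prefix hT hσ' (List.prefix_append σ ρ)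
    (heq ▸ List.prefix_append σ' τ)
  rwa [List.append_cancel_left heq]

theorem isPathOf_graft_iff (hT : IsTree T) (hS : IsTree S) (X : ℕ → Bool) :
    IsPathOf (graft T S) X ↔
      IsPathOf T X ∨ ∃ σ Y, IsTerminal T σ ∧ IsPathOf S Y ∧ X = catSeq σ Y := by
  constructor
  · intro hX
    refine or_iff_not_imp_left.2 fun hXT => ?_
    obtain ⟨n, hn⟩ : ∃ n, initSeg X n ∉ T := by simpa [IsPathOf] using hXT
    obtain ⟨σ, τ, hσ, -, hστ⟩ := (hX n).resolve_left hn
    have hXσ : initSeg X σ.length = σ := initSeg_eq_of_prefix (hστ ▸ List.prefix_append σ τ)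
    let Y : ℕ → Bool := fun i => X (σ.length + i)
    have hsplit : ∀ k, initSeg X (σ.length + k) = σ ++ initSeg Y k := fun k => by
      rw [← initSeg_catSeq_add, catSeq_shift_of_initSeg_eq hXσ]
    refine ⟨σ, Y, hσ, fun m => ?_, (catSeq_shift_of_initSeg_eq hXσ).symm⟩
    have hout : initSeg X (σ.length + (m + n)) ∉ T :=
      fun h => hn (hT _ _ (initSeg_prefix_initSeg X (by omega)) h)
    rw [hsplit] at hout
    have hmem := hσ.mem_of_append_mem_graft hT (hsplit _ ▸ hX _) hout
    exact hS _ _ (initSeg_prefix_initSeg Y (by omega)) hmem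
  · rintro (hXT | ⟨σ, Y, hσ, hY, rfl⟩)
    · exact hXT.mono Set.subset_union_left
    · exact isPathOf_graft_catSeq hT hσ hY

end Tree

theorem tree_append_on_terminal_nodes
    (T S : Set (List Bool))
    (hT : ∀ σ τ : List Bool, σ <+: τ → τ ∈ T → σ ∈ T)
    (hS : ∀ σ τ : List Bool, σ <+: τ → τ ∈ S → σ ∈ S)
    (hSne : S.Nonempty)
    (hSpruned : ∀ σ ∈ S, ∃ X, IsPathOf S X ∧ initSeg X σ.length = σ) :
    letI Terminal : List Bool → Prop :=
      fun σ => σ ∈ T ∧ σ ++ [false] ∉ T ∧ σ ++ [true] ∉ T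
    letI U : Set (List Bool) :=
      T ∪ {υ | ∃ σ τ, Terminal σ ∧ τ ∈ S ∧ υ = σ ++ τ}
    -- (1) U is a tree
    (∀ σ τ : List Bool, σ <+: τ → τ ∈ U → σ ∈ U) ∧
    -- (2) every element of U is an initial segment of a path of U
    (∀ σ ∈ U, ∃ X, IsPathOf U X ∧ initSeg X σ.length = σ) ∧
    -- (3) the paths of U are exactly the paths of T together with the σ⌢X's
    (∀ X : ℕ → Bool, IsPathOf U X ↔
      (IsPathOf T X ∨ ∃ σ Y, Terminal σ ∧ IsPathOf S Y ∧ X = catSeq σ Y)) :=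
  ⟨isTree_graft hT hS, isPruned_graft hT hSne hSpruned, isPathOf_graft_iff hT hS⟩
end

section
/- Let μ be a probability measure on ℕ → Bool with the fair-coin property. Let (I_n) be a sequence of pairwise disjoint finite subsets of ℕ and for each n let v_n : ℕ → Bool. Then μ { X : for every n there exists i ∈ I_n with X(i) ≠ v_n(i) } equals the infinite product ∏_n (1 − (1/2)^{|I_n|}). In particular, if every I_n is nonempty and ∑_n (1/2)^{|I_n|} < ∞, then this set has positive μ-measure. -/
open MeasureTheory Filter Topology

section FairCoinAux

private lemma fc_meas_eq (s : Finset ℕ) (w : ℕ → Bool) :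
    MeasurableSet {X : ℕ → Bool | ∀ i ∈ s, X i = w i} := by
  have : {X : ℕ → Bool | ∀ i ∈ s, X i = w i} = ⋂ i ∈ s, (fun X : ℕ → Bool => X i) ⁻¹' {w i} := by
    ext X; simp
  rw [this]
  exact MeasurableSet.biInter s.countable_toSet fun i _ =>
    (measurable_pi_apply i) (measurableSet_singleton _)

private lemma fc_half_pow (k : ℕ) :
    (1 / 2 : ENNReal) ^ k = ENNReal.ofReal ((1 / 2 : ℝ) ^ k) := by
  rw [ENNReal.ofReal_pow (by norm_num)]
  norm_num [ENNReal.ofReal_div_of_pos]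

private lemma fc_exp_le (x : ℝ) (hx0 : 0 ≤ x) (hx : x ≤ 1 / 2) :
    Real.exp (-(2 * x)) ≤ 1 - x := by
  have h1 : 2 * x + 1 ≤ Real.exp (2 * x) := Real.add_one_le_exp _
  have hpos : 0 < Real.exp (2 * x) := Real.exp_pos _
  rw [Real.exp_neg, inv_eq_one_div, div_le_iff₀ hpos]
  nlinarith [h1]

private lemma fc_key (μ : Measure (ℕ → Bool)) [IsProbabilityMeasure μ]
    (hfair : ∀ (s : Finset ℕ) (w : ℕ → Bool),
      μ {X | ∀ i ∈ s, X i = w i} = (1 / 2 : ENNReal) ^ s.card)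
    (I : ℕ → Finset ℕ) (hdisj : Pairwise fun m n => Disjoint (I m) (I n))
    (v : ℕ → ℕ → Bool) :
    ∀ (N : ℕ) (s : Finset ℕ) (w : ℕ → Bool), (∀ n < N, Disjoint (I n) s) →
    μ ({X | ∀ i ∈ s, X i = w i} ∩ ⋂ n ∈ Finset.range N, {X | ∃ i ∈ I n, X i ≠ v n i})
      = ENNReal.ofReal ((1/2:ℝ)^s.card * ∏ n ∈ Finset.range N, (1 - (1/2:ℝ)^(I n).card)) := by
  classical
  intro N
  induction N with
  | zero =>
    intro s w _
    simp only [Finset.range_zero, Finset.notMem_empty, Set.iInter_of_empty,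
      Set.iInter_univ, Set.inter_univ, Finset.prod_empty, mul_one]
    rw [hfair, fc_half_pow]
  | succ N ih =>
    intro s w hdis
    set A : ℕ → Set (ℕ → Bool) := fun n => {X | ∃ i ∈ I n, X i ≠ v n i} with hA
    set E : Set (ℕ → Bool) := {X | ∀ i ∈ s, X i = w i} with hE
    set D : Set (ℕ → Bool) := E ∩ ⋂ n ∈ Finset.range N, A n with hD
    set B : Set (ℕ → Bool) := {X | ∀ i ∈ I N, X i = v N i} with hB
    have hmeasB : MeasurableSet B := fc_meas_eq _ _
    have hset : E ∩ ⋂ n ∈ Finset.range (N+1), A n = D \ B := by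
      rw [hD, Finset.range_add_one]
      ext X
      simp only [Set.mem_inter_iff, Set.mem_iInter, Finset.mem_insert, Finset.mem_range,
        Set.mem_diff, hA, hB, hE, Set.mem_setOf_eq]
      constructor
      · rintro ⟨h1, h2⟩
        refine ⟨⟨h1, fun n hn => h2 n (Or.inr hn)⟩, ?_⟩
        intro hcon
        obtain ⟨i, hi, hne⟩ := h2 N (Or.inl rfl)
        exact hne (hcon i hi)
      · rintro ⟨⟨h1, h2⟩, h3⟩
        refine ⟨h1, fun n hn => ?_⟩
        rcases hn with rfl | hn
        · by_contra hcon
          push_neg at hcon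
          exact h3 hcon
        · exact h2 n hn
    -- intersect with B : patched condition
    set w' : ℕ → Bool := fun i => if i ∈ I N then v N i else w i with hw'
    have hEB : E ∩ B = {X | ∀ i ∈ s ∪ I N, X i = w' i} := by
      ext X
      simp only [Set.mem_inter_iff, hE, hB, Set.mem_setOf_eq, Finset.mem_union, hw']
      constructor
      · rintro ⟨h1, h2⟩ i hi
        by_cases h : i ∈ I N
        · simp [h, h2 i h]
        · simp [h, h1 i (hi.resolve_right h)]
      · intro h
        constructor
        · intro i hi
          have hni : i ∉ I N := Finset.disjoint_right.mp (hdis N (Nat.lt_succ_self N)) hi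
          simpa [hni] using h i (Or.inl hi)
        · intro i hi
          simpa [hi] using h i (Or.inr hi)
    have hdisN : Disjoint s (I N) := (hdis N (Nat.lt_succ_self N)).symm
    have hDB : D ∩ B = {X | ∀ i ∈ s ∪ I N, X i = w' i} ∩ ⋂ n ∈ Finset.range N, A n := by
      rw [hD, ← hEB]; ext X; simp only [Set.mem_inter_iff]; tauto
    have hμD : μ D = ENNReal.ofReal ((1/2:ℝ)^s.card * ∏ n ∈ Finset.range N, (1 - (1/2:ℝ)^(I n).card)) :=
      ih s w fun n hn => hdis n (hn.trans (Nat.lt_succ_self N))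
    have hμDB : μ (D ∩ B)
        = ENNReal.ofReal ((1/2:ℝ)^s.card * (1/2:ℝ)^(I N).card
            * ∏ n ∈ Finset.range N, (1 - (1/2:ℝ)^(I n).card)) := by
      rw [hDB, ih (s ∪ I N) w' (fun n hn => Finset.disjoint_union_right.mpr
        ⟨hdis n (hn.trans (Nat.lt_succ_self N)), hdisj (Nat.ne_of_lt hn)⟩),
        Finset.card_union_of_disjoint hdisN, pow_add]
    have h1 : μ (D ∩ B) + μ (D \ B) = μ D := measure_inter_add_diff D hmeasB
    have h2 : μ (D \ B) = μ D - μ (D ∩ B) := by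
      rw [← h1, ENNReal.add_sub_cancel_left (measure_ne_top μ _)]
    have hP0 : (0:ℝ) ≤ ∏ n ∈ Finset.range N, (1 - (1/2:ℝ)^(I n).card) :=
      Finset.prod_nonneg fun n _ => by
        have : (1/2:ℝ)^(I n).card ≤ 1 := pow_le_one₀ (by norm_num) (by norm_num)
        linarith
    have hhalf0 : (0:ℝ) ≤ (1/2:ℝ)^s.card := by positivity
    rw [hset, h2, hμD, hμDB, ← ENNReal.ofReal_sub _ (by positivity)]
    rw [Finset.prod_range_succ]
    congr 1
    ring
  termination_by N => N

end FairCoinAux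

theorem fair_coin_avoiding_prescribed_values
    (μ : Measure (ℕ → Bool)) [IsProbabilityMeasure μ]
    (hfair : ∀ (s : Finset ℕ) (w : ℕ → Bool),
      μ {X | ∀ i ∈ s, X i = w i} = (1 / 2 : ENNReal) ^ s.card)
    (I : ℕ → Finset ℕ) (hdisj : Pairwise fun m n => Disjoint (I m) (I n))
    (v : ℕ → ℕ → Bool) :
    μ {X | ∀ n, ∃ i ∈ I n, X i ≠ v n i} =
      ENNReal.ofReal (∏' n : ℕ, (1 - (1 / 2 : ℝ) ^ (I n).card)) ∧
    ((∀ n, (I n).Nonempty) → (Summable fun n : ℕ => (1 / 2 : ℝ) ^ (I n).card) →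
      0 < μ {X | ∀ n, ∃ i ∈ I n, X i ≠ v n i}) := by
  classical
  set f : ℕ → ℝ := fun n => 1 - (1/2:ℝ)^(I n).card with hf
  have hf0 : ∀ n, 0 ≤ f n := fun n => by
    have : (1/2:ℝ)^(I n).card ≤ 1 := pow_le_one₀ (by norm_num) (by norm_num)
    simp only [hf]; linarith
  have hf1 : ∀ n, f n ≤ 1 := fun n => by
    have : (0:ℝ) ≤ (1/2:ℝ)^(I n).card := by positivity
    simp only [hf]; linarith
  -- HasProd for f
  have hanti : Antitone fun t : Finset ℕ => ∏ n ∈ t, f n := by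
    intro t u htu
    dsimp only
    rw [← Finset.prod_sdiff htu]
    calc (∏ n ∈ u \ t, f n) * ∏ n ∈ t, f n
        ≤ 1 * ∏ n ∈ t, f n := by
          apply mul_le_mul_of_nonneg_right
          · exact Finset.prod_le_one (fun n _ => hf0 n) (fun n _ => hf1 n)
          · exact Finset.prod_nonneg fun n _ => hf0 n
      _ = ∏ n ∈ t, f n := one_mul _
  have hbdd : BddBelow (Set.range fun t : Finset ℕ => ∏ n ∈ t, f n) := by
    refine ⟨0, ?_⟩
    rintro x ⟨t, rfl⟩
    exact Finset.prod_nonneg fun n _ => hf0 n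
  have hhp : HasProd f (⨅ t : Finset ℕ, ∏ n ∈ t, f n) :=
    tendsto_atTop_ciInf hanti hbdd
  have htp : Tendsto (fun N => ∏ n ∈ Finset.range N, f n) atTop (𝓝 (∏' n, f n)) :=
    hhp.tprod_eq ▸ hhp.tendsto_prod_nat
  -- measure side
  set A : ℕ → Set (ℕ → Bool) := fun n => {X | ∃ i ∈ I n, X i ≠ v n i} with hA
  set C : ℕ → Set (ℕ → Bool) := fun N => ⋂ n ∈ Finset.range N, A n with hC
  have hmeasA : ∀ n, MeasurableSet (A n) := fun n => by
    have : A n = {X : ℕ → Bool | ∀ i ∈ I n, X i = v n i}ᶜ := by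
      ext X; simp [hA]
    rw [this]
    exact (fc_meas_eq _ _).compl
  have hmeasC : ∀ N, MeasurableSet (C N) := fun N =>
    MeasurableSet.biInter (Finset.range N).countable_toSet fun n _ => hmeasA n
  have hμC : ∀ N, μ (C N) = ENNReal.ofReal (∏ n ∈ Finset.range N, f n) := by
    intro N
    have := fc_key μ hfair I hdisj v N ∅ (fun _ => true) (fun n _ => Finset.disjoint_empty_right _)
    simpa [hC, hA, hf] using this
  have hCanti : Antitone C := by
    intro m n hmn X hX
    simp only [hC, Set.mem_iInter, Finset.mem_range] at *
    exact fun k hk => hX k (hk.trans_le hmn)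
  have hiInter : ⋂ N, C N = {X | ∀ n, ∃ i ∈ I n, X i ≠ v n i} := by
    ext X
    simp only [hC, hA, Set.mem_iInter, Set.mem_setOf_eq, Finset.mem_range]
    constructor
    · intro h n
      exact h (n+1) n (Nat.lt_succ_self n)
    · intro h N n _
      exact h n
  have hmt : Tendsto (μ ∘ C) atTop (𝓝 (μ (⋂ N, C N))) :=
    tendsto_measure_iInter_atTop (fun N => (hmeasC N).nullMeasurableSet) hCanti
      ⟨0, measure_ne_top μ _⟩
  rw [hiInter] at hmt
  have hmt2 : Tendsto (μ ∘ C) atTop (𝓝 (ENNReal.ofReal (∏' n, f n))) := by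
    have : (μ ∘ C) = fun N => ENNReal.ofReal (∏ n ∈ Finset.range N, f n) := by
      funext N; exact hμC N
    rw [this]
    exact ENNReal.tendsto_ofReal htp
  have hmain : μ {X | ∀ n, ∃ i ∈ I n, X i ≠ v n i} = ENNReal.ofReal (∏' n, f n) :=
    tendsto_nhds_unique hmt hmt2
  refine ⟨hmain, ?_⟩
  intro hne hsum
  rw [hmain]
  apply ENNReal.ofReal_pos.mpr
  -- positivity of the infinite product
  set a : ℕ → ℝ := fun n => (1/2:ℝ)^(I n).card with ha
  have ha0 : ∀ n, 0 ≤ a n := fun n => by positivity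
  have hah : ∀ n, a n ≤ 1/2 := fun n => by
    have hcard : 1 ≤ (I n).card := Finset.card_pos.mpr (hne n)
    calc a n ≤ (1/2:ℝ)^1 := pow_le_pow_of_le_one (by norm_num) (by norm_num) hcard
      _ = 1/2 := pow_one _
  have hT : ∀ N, ∑ n ∈ Finset.range N, a n ≤ ∑' n, a n := fun N =>
    Summable.sum_le_tsum _ (fun n _ => ha0 n) hsum
  have hlb : ∀ N, Real.exp (-(2 * ∑' n, a n)) ≤ ∏ n ∈ Finset.range N, f n := by
    intro N
    calc Real.exp (-(2 * ∑' n, a n))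
        ≤ Real.exp (-(2 * ∑ n ∈ Finset.range N, a n)) := by
          apply Real.exp_le_exp.mpr
          have := hT N
          linarith
      _ = ∏ n ∈ Finset.range N, Real.exp (-(2 * a n)) := by
          rw [← Real.exp_sum]
          congr 1
          rw [Finset.sum_neg_distrib, ← Finset.mul_sum]
      _ ≤ ∏ n ∈ Finset.range N, f n := by
          apply Finset.prod_le_prod
          · intro n _; exact (Real.exp_pos _).le
          · intro n _; exact fc_exp_le (a n) (ha0 n) (hah n)
  have : Real.exp (-(2 * ∑' n, a n)) ≤ ∏' n, f n := ge_of_tendsto' htp hlb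
  calc (0:ℝ) < Real.exp (-(2 * ∑' n, a n)) := Real.exp_pos _
    _ ≤ ∏' n, f n := this
end

section
/- Let E be a finite type, q : E → ℕ with q(x) ≥ 1 for all x, A a finite set of functions σ : E → ℕ such that σ(x) < q(x) for all σ ∈ A and x ∈ E, and w : A → nonnegative reals. Then there exists J : E → ℕ with J(x) < q(x) for all x, such that the sum of w(σ) over all σ ∈ A satisfying σ(x) ≠ J(x) for every x ∈ E is at most (∑_{σ ∈ A} w(σ)) · ∏_{x ∈ E} (1 − 1/q(x)). -/
theorem iterated_pigeonhole_avoidance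
    {E : Type*} [Fintype E] (q : E → ℕ) (hq : ∀ x, 1 ≤ q x)
    (A : Finset (E → ℕ)) (hA : ∀ σ ∈ A, ∀ x, σ x < q x)
    (w : (E → ℕ) → ℝ) (hw : ∀ σ, 0 ≤ w σ) :
    ∃ J : E → ℕ, (∀ x, J x < q x) ∧
      ∑ σ ∈ A.filter (fun σ => ∀ x, σ x ≠ J x), w σ ≤
        (∑ σ ∈ A, w σ) * ∏ x : E, (1 - 1 / (q x : ℝ)) := by
  classical
  suffices h : ∀ s : Finset E, ∃ J : E → ℕ, (∀ x, J x < q x) ∧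
      ∑ σ ∈ A.filter (fun σ => ∀ x ∈ s, σ x ≠ J x), w σ ≤
        (∑ σ ∈ A, w σ) * ∏ x ∈ s, (1 - 1 / (q x : ℝ)) by
    obtain ⟨J, hJ, hb⟩ := h Finset.univ
    exact ⟨J, hJ, by simpa using hb⟩
  intro s
  induction s using Finset.induction_on with
  | empty =>
      refine ⟨fun _ => 0, fun x => hq x, ?_⟩
      simp
  | @insert a s ha ih =>
      obtain ⟨J', hJ', hb⟩ := ih
      set A' := A.filter (fun σ => ∀ x ∈ s, σ x ≠ J' x) with hA'def
      have hfib : ∑ j ∈ Finset.range (q a),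
          ∑ σ ∈ A'.filter (fun σ => σ a = j), w σ = ∑ σ ∈ A', w σ := by
        apply Finset.sum_fiberwise_of_maps_to
        intro σ hσ
        exact Finset.mem_range.mpr (hA σ (Finset.mem_filter.mp hσ).1 a)
      have hqa : (0:ℝ) < (q a : ℝ) := by
        exact_mod_cast Nat.lt_of_lt_of_le Nat.zero_lt_one (hq a)
      have hex : ∃ j ∈ Finset.range (q a),
          (∑ σ ∈ A', w σ) / (q a : ℝ) ≤ ∑ σ ∈ A'.filter (fun σ => σ a = j), w σ := by
        apply Finset.exists_le_of_sum_le ⟨0, Finset.mem_range.mpr (hq a)⟩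
        rw [hfib, Finset.sum_const, Finset.card_range, nsmul_eq_mul]
        rw [mul_div_cancel₀]
        exact ne_of_gt hqa
      obtain ⟨j, hj, hWj⟩ := hex
      refine ⟨Function.update J' a j, ?_, ?_⟩
      · intro x
        rcases eq_or_ne x a with rfl | hx
        · simpa using Finset.mem_range.mp hj
        · simpa [Function.update_of_ne hx] using hJ' x
      · have hset : A.filter (fun σ => ∀ x ∈ insert a s, σ x ≠ Function.update J' a j x)
            = A'.filter (fun σ => ¬ σ a = j) := by
          rw [hA'def, Finset.filter_filter]
          apply Finset.filter_congr
          intro σ _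
          simp only [Finset.mem_insert]
          constructor
          · intro h
            refine ⟨fun x hx => ?_, ?_⟩
            · have := h x (Or.inr hx)
              rwa [Function.update_of_ne (ne_of_mem_of_not_mem hx ha)] at this
            · have := h a (Or.inl rfl)
              rwa [Function.update_self] at this
          · rintro ⟨h1, h2⟩ x hx
            rcases hx with rfl | hx
            · rwa [Function.update_self]
            · rw [Function.update_of_ne (ne_of_mem_of_not_mem hx ha)]
              exact h1 x hx
        rw [hset]
        have hsplit : ∑ σ ∈ A'.filter (fun σ => ¬ σ a = j), w σ
            = (∑ σ ∈ A', w σ) - ∑ σ ∈ A'.filter (fun σ => σ a = j), w σ := by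
          rw [eq_sub_iff_add_eq, add_comm]
          exact Finset.sum_filter_add_sum_filter_not _ _ _
        have hfac : (0:ℝ) ≤ 1 - 1 / (q a : ℝ) := by
          have : 1 / (q a : ℝ) ≤ 1 := by
            rw [div_le_one hqa]
            exact_mod_cast hq a
          linarith
        calc ∑ σ ∈ A'.filter (fun σ => ¬ σ a = j), w σ
            ≤ (∑ σ ∈ A', w σ) * (1 - 1 / (q a : ℝ)) := by
              rw [hsplit]
              have : (∑ σ ∈ A', w σ) * (1 - 1 / (q a : ℝ))
                  = (∑ σ ∈ A', w σ) - (∑ σ ∈ A', w σ) / (q a : ℝ) := by ring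
              rw [this]
              linarith
          _ ≤ ((∑ σ ∈ A, w σ) * ∏ x ∈ s, (1 - 1 / (q x : ℝ))) * (1 - 1 / (q a : ℝ)) :=
              mul_le_mul_of_nonneg_right hb hfac
          _ = (∑ σ ∈ A, w σ) * ∏ x ∈ insert a s, (1 - 1 / (q x : ℝ)) := by
              rw [Finset.prod_insert ha]; ring
end
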